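/- Let K be a field of characteristic different from 2, V a K-vector space of finite dimension m, Q a quadratic form on V with polar bilinear form B, and (b_1, …, b_m) a basis of V which is orthogonal for B (i.e. B(b_i,b_j) = 0 for i ≠ j). Then the 2^m elements ι_Q(b_{i_1})·ι_Q(b_{i_2})⋯ι_Q(b_{i_k}), taken over all subsets {i_1 < i_2 < … < i_k} of {1,…,m} (the empty product being 1), form a basis of the Clifford algebra Cl(V,Q) as a K-vector space; in particular Cl(V,Q) has dimension 2^m, equal to that of the exterior algebra ΛV. -/

import Mathlib

/-!
Writing `eᵢ = ι(bᵢ)`, orthogonality gives `eᵢ eⱼ = -eⱼ eᵢ` for `i ≠ j` and `eᵢ² = Q(bᵢ)`, so any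
word in the generators can be sorted and reduced, modulo scalars and signs, to an increasing
product `e_{i₁} ⋯ e_{i_k}`: these `2^m` products span `Cl(V,Q)`. In characteristic not two the
contraction construction identifies `Cl(V,Q)` with `ΛV` as vector spaces, and `ΛV` has
dimension `2^m`, so the spanning family is a basis.
-/

open Module Submodule

namespace CliffordAlgebra

variable {R M I : Type*} [CommRing R] [AddCommGroup M] [Module R M] [LinearOrder I]
  (Q : QuadraticForm R M) (v : I → M)

noncomputable def orderedProd (s : Finset I) : CliffordAlgebra Q :=
  ((s.sort (· ≤ ·)).map fun i => ι Q (v i)).prod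

@[simp]
theorem orderedProd_empty : orderedProd Q v ∅ = 1 := by
  simp [orderedProd]

variable {Q v}

theorem orderedProd_insert_of_lt {i : I} {s : Finset I} (h : ∀ k ∈ s, i < k) :
    orderedProd Q v (insert i s) = ι Q (v i) * orderedProd Q v s := by
  have hi : i ∉ s := fun hi => lt_irrefl i (h i hi)
  rw [orderedProd, Finset.sort_insert (· ≤ ·) (fun k hk => (h k hk).le) hi, List.map_cons,
    List.prod_cons, orderedProd]

theorem ι_mul_mem_span_orderedProd_of_lt {j : I} {s : Finset I} (hj : ∀ k ∈ s, j < k)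
    {x : CliffordAlgebra Q} (hx : x ∈ span R (orderedProd Q v '' {u | u ⊆ s})) :
    ι Q (v j) * x ∈ span R (orderedProd Q v '' {u | u ⊆ insert j s}) := by
  have hmap := mem_map_of_mem (f := LinearMap.mulLeft R (ι Q (v j))) hx
  rw [map_span] at hmap
  refine span_mono ?_ hmap
  rintro _ ⟨_, ⟨u, hu, rfl⟩, rfl⟩
  exact ⟨insert j u, Finset.insert_subset_insert j hu,
    orderedProd_insert_of_lt fun k hk => hj k (hu hk)⟩

theorem ι_mul_orderedProd_mem_span (horth : Pairwise fun i j => Q.IsOrtho (v i) (v j))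
    (s : Finset I) (i : I) :
    ι Q (v i) * orderedProd Q v s ∈ span R (orderedProd Q v '' {u | u ⊆ insert i s}) := by
  classical
  induction s using Finset.induction_on_min generalizing i with
  | empty =>
    refine subset_span ⟨{i}, Finset.Subset.refl _, ?_⟩
    simp [orderedProd]
  | insert j s hj ih =>
    rw [orderedProd_insert_of_lt hj]
    rcases lt_trichotomy i j with hij | rfl | hji
    · rw [← orderedProd_insert_of_lt hj, ← orderedProd_insert_of_lt]
      · exact subset_span ⟨_, Finset.Subset.refl _, rfl⟩
      · simpa using ⟨hij, fun k hk => hij.trans (hj k hk)⟩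
    · rw [← mul_assoc, ι_sq_scalar, ← Algebra.smul_def]
      exact smul_mem _ _ (subset_span ⟨s, fun k hk => by simp [hk], rfl⟩)
    · rw [ι_mul_ι_mul_of_isOrtho _ (horth hji.ne'), neg_mem_iff, Finset.insert_comm]
      exact ι_mul_mem_span_orderedProd_of_lt (by simpa using ⟨hji, hj⟩) (ih i)

variable (Q v) in
theorem top_le_span_orderedProd (hv : ⊤ ≤ span R (Set.range v))
    (horth : Pairwise fun i j => Q.IsOrtho (v i) (v j)) :
    ⊤ ≤ span R (Set.range (orderedProd Q v)) := by
  set S := span R (Set.range (orderedProd Q v))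
  have hstable : ∀ m x, x ∈ S → ι Q m * x ∈ S := by
    intro m x hx
    refine span_induction (p := fun m _ => ι Q m * x ∈ S) ?_ ?_ ?_ ?_ (hv mem_top)
    · rintro _ ⟨i, rfl⟩
      refine (span_le.2 ?_ : S ≤ S.comap (LinearMap.mulLeft R (ι Q (v i)))) hx
      rintro _ ⟨s, rfl⟩
      exact span_mono (Set.image_subset_range _ _) (ι_mul_orderedProd_mem_span horth s i)
    · simp
    · intro a b _ _ ha hb
      simpa [add_mul] using add_mem ha hb
    · intro c a _ ha
      simpa using smul_mem S c ha
  rintro x -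
  induction x using left_induction with
  | algebraMap r =>
    rw [Algebra.algebraMap_eq_smul_one, ← orderedProd_empty Q v]
    exact smul_mem _ _ (subset_span ⟨∅, rfl⟩)
  | add x y hx hy => exact add_mem hx hy
  | ι_mul x m hx => exact hstable m x hx

end CliffordAlgebra

theorem ExteriorAlgebra.finrank_eq_two_pow {K V : Type*} [Field K] [AddCommGroup V] [Module K V]
    [FiniteDimensional K V] : finrank K (ExteriorAlgebra K V) = 2 ^ finrank K V := by
  rw [finrank_eq_card_basis (finBasis K V).ExteriorAlgebra, Fintype.card_finset,
    Fintype.card_fin]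

theorem CliffordAlgebra.finrank_eq_two_pow {K V : Type*} [Field K] [Invertible (2 : K)]
    [AddCommGroup V] [Module K V] [FiniteDimensional K V] (Q : QuadraticForm K V) :
    finrank K (CliffordAlgebra Q) = 2 ^ finrank K V :=
  (equivExterior Q).finrank_eq.trans ExteriorAlgebra.finrank_eq_two_pow

theorem stmt3 (K : Type) [Field K] (h2 : (2 : K) ≠ 0)
    (V : Type) [AddCommGroup V] [Module K V]
    (m : ℕ) (b : Module.Basis (Fin m) K V) (Q : QuadraticForm K V)
    (horth : ∀ i j : Fin m, i ≠ j → QuadraticMap.polar Q (b i) (b j) = 0) :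
    (∃ bc : Module.Basis (Finset (Fin m)) K (CliffordAlgebra Q),
        ∀ s : Finset (Fin m),
          bc s = ((s.sort (· ≤ ·)).map fun i => CliffordAlgebra.ι Q (b i)).prod) ∧
      Module.finrank K (CliffordAlgebra Q) = 2 ^ m ∧
      Module.finrank K (CliffordAlgebra Q) = Module.finrank K (ExteriorAlgebra K V) := by
  have : Invertible (2 : K) := invertibleOfNonzero h2
  have : FiniteDimensional K V := b.finiteDimensional_of_finite
  have hdim : finrank K V = m := by simp [finrank_eq_card_basis b]
  have hcl : finrank K (CliffordAlgebra Q) = 2 ^ m := by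
    rw [CliffordAlgebra.finrank_eq_two_pow, hdim]
  have hspan := CliffordAlgebra.top_le_span_orderedProd Q b b.span_eq.ge
    fun i j hij => QuadraticMap.isOrtho_polarBilin.1 (horth i j hij)
  refine ⟨⟨basisOfTopLeSpanOfCardEqFinrank _ hspan (by simp [hcl]), fun s => ?_⟩, hcl, ?_⟩
  · simp [CliffordAlgebra.orderedProd]
  · rw [hcl, ExteriorAlgebra.finrank_eq_two_pow, hdim]
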